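/- arXiv:math/0209308 — 6 statements merged into one kernel-verified Lean document; each statement's English description precedes it below -/
import Mathlib

section
/- Let F be a field, d ≥ 2 and l ≥ 3 integers, R = F[X_1, …, X_d], and let I be the monomial ideal generated by all monomials of degree l in X_1, …, X_d except the monomial X_1^{l-1}X_2. Then: (i) X_1^{l-1}X_2 ∉ I; (ii) (X_1, …, X_d)·(X_1^{l-1}X_2) ⊆ I; (iii) I·(X_1^{l-1}X_2) ⊆ I^2 + (X_1^l); and (iv) for every integer n ≥ 0 and every monomial m with m ∈ I^n and m ∉ I^{n+1}, one has m·X_1^l ∉ I^{n+2}. (These facts express that the image of X_1^l is a non-zerodivisor on the associated graded ring gr_I(R) while the depth of gr_I(R) is exactly 1.) -/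
namespace Stmt2Aux

open Finsupp

variable {d : ℕ}

def deg (τ : Fin d →₀ ℕ) : ℕ := τ.sum fun _ e => e

lemma deg_add (a b : Fin d →₀ ℕ) : deg (a + b) = deg a + deg b :=
  Finsupp.sum_add_index' (fun _ => rfl) (fun _ _ _ => rfl)

lemma deg_zero : deg (0 : Fin d →₀ ℕ) = 0 := by simp [deg]

lemma deg_single (a : Fin d) (n : ℕ) : deg (Finsupp.single a n) = n :=
  Finsupp.sum_single_index rfl

lemma deg_eq_zero {τ : Fin d →₀ ℕ} (h : deg τ = 0) : τ = 0 := by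
  ext j
  by_contra hj
  have h2 : deg τ = ∑ a ∈ τ.support, τ a := rfl
  have : τ j ≤ ∑ a ∈ τ.support, τ a :=
    Finset.single_le_sum (fun _ _ => Nat.zero_le _) (Finsupp.mem_support_iff.mpr hj)
  simp only [Finsupp.coe_zero, Pi.zero_apply] at hj ⊢
  omega

lemma deg_mono {a b : Fin d →₀ ℕ} (h : a ≤ b) : deg a ≤ deg b := by
  obtain ⟨c, rfl⟩ := le_iff_exists_add.mp h
  rw [deg_add]; omega

lemma eq_of_le_of_deg_le {a b : Fin d →₀ ℕ} (h : a ≤ b) (hd : deg b ≤ deg a) : a = b := by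
  obtain ⟨c, rfl⟩ := le_iff_exists_add.mp h
  rw [deg_add] at hd
  have : c = 0 := deg_eq_zero (by omega)
  simp [this]

lemma exists_le_deg : ∀ (k : ℕ) (τ : Fin d →₀ ℕ), k ≤ deg τ → ∃ g, g ≤ τ ∧ deg g = k := by
  intro k
  induction k with
  | zero => exact fun τ _ => ⟨0, zero_le, deg_zero⟩
  | succ k ih =>
    intro τ h
    have hτ : τ ≠ 0 := by rintro rfl; rw [deg_zero] at h; omega
    have : ∃ j, τ j ≠ 0 := by
      by_contra hc
      push_neg at hc
      exact hτ (by ext j; simpa using hc j)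
    obtain ⟨j, hj⟩ := this
    have hle : Finsupp.single j 1 ≤ τ := by
      rw [Finsupp.le_def]; intro i
      rcases eq_or_ne i j with rfl | hij
      · simpa using Nat.one_le_iff_ne_zero.mpr hj
      · simp [Finsupp.single_apply, (Ne.symm hij)]
    obtain ⟨τ', hτ'⟩ := le_iff_exists_add.mp hle
    have hdeg : deg τ = 1 + deg τ' := by rw [hτ', deg_add, deg_single]
    obtain ⟨g, hg1, hg2⟩ := ih τ' (by omega)
    refine ⟨g + Finsupp.single j 1, ?_, by rw [deg_add, deg_single, hg2]⟩
    calc g + Finsupp.single j 1 ≤ τ' + Finsupp.single j 1 := add_le_add_left hg1 _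
    _ = τ := by rw [hτ', add_comm]

lemma erase_le (a : Fin d) (τ : Fin d →₀ ℕ) : Finsupp.erase a τ ≤ τ := by
  rw [Finsupp.le_def]; intro i
  rw [Finsupp.erase_apply]
  split <;> omega

lemma deg_erase (a : Fin d) (τ : Fin d →₀ ℕ) : deg (Finsupp.erase a τ) + τ a = deg τ := by
  conv_rhs => rw [← Finsupp.single_add_erase a τ]
  rw [deg_add, deg_single]; omega

lemma exists_le_deg_off (a : Fin d) (k : ℕ) (τ : Fin d →₀ ℕ) (h : k + τ a ≤ deg τ) :
    ∃ g, g ≤ τ ∧ g a = 0 ∧ deg g = k := by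
  have hd := deg_erase a τ
  obtain ⟨g, hg1, hg2⟩ := exists_le_deg k (Finsupp.erase a τ) (by omega)
  refine ⟨g, hg1.trans (erase_le a τ), ?_, hg2⟩
  have := Finsupp.le_def.mp hg1 a
  rw [Finsupp.erase_same] at this
  omega

lemma deg_multiset_sum (L : Multiset (Fin d →₀ ℕ)) : deg L.sum = (L.map deg).sum := by
  induction L using Multiset.induction_on with
  | empty => simp [deg_zero]
  | cons a t ih => simp [Multiset.sum_cons, deg_add, ih]

lemma deg_multiset_sum_const {L : Multiset (Fin d →₀ ℕ)} {l : ℕ}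
    (h : ∀ g ∈ L, deg g = l) : deg L.sum = Multiset.card L * l := by
  rw [deg_multiset_sum]
  have : L.map deg = Multiset.replicate (Multiset.card L) l :=
    Multiset.eq_replicate.mpr ⟨by simp, by simpa using fun g hg => h g hg⟩
  rw [this, Multiset.sum_replicate, smul_eq_mul]

lemma apply_multiset_sum (L : Multiset (Fin d →₀ ℕ)) (j : Fin d) :
    L.sum j = (L.map (fun g => g j)).sum := by
  induction L using Multiset.induction_on with
  | empty => simp
  | cons a t ih => simp [Multiset.sum_cons, ih]

section Nu

variable {l : ℕ} {e0 e1 : Fin d}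

/-- the `no (m+1)`-decomposition lemma -/
lemma noDec (hl : 3 ≤ l) (he : e0 ≠ e1) (m : ℕ) :
    ¬ ∃ L : Multiset (Fin d →₀ ℕ),
      (∀ g ∈ L, deg g = l ∧ g ≠ Finsupp.single e0 (l-1) + Finsupp.single e1 1) ∧
      Multiset.card L = m + 1 ∧
      L.sum ≤ (Finsupp.single e0 (l-1) + Finsupp.single e1 1) + Finsupp.single e0 (m*l) := by
  set ν := Finsupp.single e0 (l-1) + Finsupp.single e1 1 with hν
  rintro ⟨L, hG, hcard, hle⟩
  set σ := L.sum with hσ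
  have hdegσ : deg σ = (m+1) * l := by
    rw [hσ, deg_multiset_sum_const (fun g hg => (hG g hg).1), hcard]
  have hdegτ : deg (ν + Finsupp.single e0 (m*l)) = (m+1)*l := by
    rw [deg_add, hν, deg_add, deg_single, deg_single, deg_single]
    have : 1 ≤ l := by omega
    ring_nf
    omega
  have heq : σ = ν + Finsupp.single e0 (m*l) :=
    eq_of_le_of_deg_le hle (by omega)
  -- evaluate coordinates
  have hσ1 : σ e1 = 1 := by
    rw [heq, hν]
    simp [Finsupp.single_apply, he, Ne.symm he]
  have : ∃ g ∈ L, g e1 ≠ 0 := by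
    by_contra hc
    push_neg at hc
    have : σ e1 = 0 := by
      rw [hσ, apply_multiset_sum]
      exact Multiset.sum_eq_zero (by
        intro x hx
        obtain ⟨g, hg, rfl⟩ := Multiset.mem_map.mp hx
        exact hc g hg)
    omega
  obtain ⟨g, hgL, hg1⟩ := this
  have hgle : g ≤ σ := Multiset.single_le_sum (fun x _ => zero_le) g hgL
  have hg1' : g e1 = 1 := by
    have := Finsupp.le_def.mp hgle e1
    omega
  have hgj : ∀ j, j ≠ e0 → j ≠ e1 → g j = 0 := by
    intro j hj0 hj1
    have h1 := Finsupp.le_def.mp hgle j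
    rw [heq, hν] at h1
    simp [Finsupp.single_apply, Ne.symm hj0, Ne.symm hj1] at h1
    exact h1
  have hgeq : g = Finsupp.single e0 (g e0) + Finsupp.single e1 (g e1) := by
    ext j
    rcases eq_or_ne j e0 with rfl | hj0
    · simp [Finsupp.single_apply, Ne.symm he]
    rcases eq_or_ne j e1 with rfl | hj1
    · simp [Finsupp.single_apply, he, Ne.symm he]
    · simp [Finsupp.single_apply, Ne.symm hj0, Ne.symm hj1, hgj j hj0 hj1]
  have hdg : deg g = l := (hG g hgL).1
  have hge0 : g e0 = l - 1 := by
    rw [hgeq, deg_add, deg_single, deg_single] at hdg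
    omega
  exact (hG g hgL).2 (by rw [hgeq, hge0, hg1'])

end Nu

end Stmt2Aux
namespace Stmt2Aux
open Finsupp
variable {d : ℕ} {l : ℕ} {e0 e1 : Fin d}

lemma nu_apply_e0 (he : e0 ≠ e1) (l : ℕ) :
    (Finsupp.single e0 (l-1) + Finsupp.single e1 1 : Fin d →₀ ℕ) e0 = l - 1 := by
  rw [Finsupp.add_apply, Finsupp.single_eq_same, Finsupp.single_eq_of_ne' (Ne.symm he), add_zero]

lemma nu_apply_e1 (he : e0 ≠ e1) (l : ℕ) :
    (Finsupp.single e0 (l-1) + Finsupp.single e1 1 : Fin d →₀ ℕ) e1 = 1 := by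
  rw [Finsupp.add_apply, Finsupp.single_eq_same, Finsupp.single_eq_of_ne' he, zero_add]

/-- key constructive lemma: if `deg τ ≥ (m+1)l` and `τ ≠ ν + m·l·e0` then τ dominates a
sum of `m+1` admissible exponents. -/
lemma exDec (hl : 3 ≤ l) (he : e0 ≠ e1) :
    ∀ (m : ℕ) (τ : Fin d →₀ ℕ), (m+1) * l ≤ deg τ →
      τ ≠ (Finsupp.single e0 (l-1) + Finsupp.single e1 1) + Finsupp.single e0 (m*l) →
      ∃ L : Multiset (Fin d →₀ ℕ),
        (∀ g ∈ L, deg g = l ∧ g ≠ Finsupp.single e0 (l-1) + Finsupp.single e1 1) ∧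
        Multiset.card L = m + 1 ∧ L.sum ≤ τ := by
  set ν := Finsupp.single e0 (l-1) + Finsupp.single e1 1 with hν
  have hνe0 : ν e0 = l - 1 := nu_apply_e0 he l
  have hνe1 : ν e1 = 1 := nu_apply_e1 he l
  intro m
  induction m with
  | zero =>
    intro τ hdeg hne
    simp only [Nat.zero_mul, Finsupp.single_zero, add_zero, one_mul] at hdeg hne
    by_cases h0 : l ≤ τ e0
    · refine ⟨{Finsupp.single e0 l}, ?_, by simp, ?_⟩
      · intro g hg
        rw [Multiset.mem_singleton] at hg
        subst hg
        refine ⟨deg_single _ _, fun hc => ?_⟩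
        have h1 := congrArg (fun f => f e1) hc
        rw [hνe1, Finsupp.single_eq_of_ne' he] at h1
        omega
      · rw [Multiset.sum_singleton, Finsupp.le_def]
        intro i
        rcases eq_or_ne i e0 with rfl | hi
        · rw [Finsupp.single_eq_same]; exact h0
        · rw [Finsupp.single_eq_of_ne' (Ne.symm hi)]; omega
    · by_cases hB : l + τ e0 ≤ deg τ
      · obtain ⟨g, hg1, hg2, hg3⟩ := exists_le_deg_off e0 l τ hB
        refine ⟨{g}, ?_, by simp, by simpa [Multiset.sum_singleton] using hg1⟩
        intro x hx
        rw [Multiset.mem_singleton] at hx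
        subst hx
        refine ⟨hg3, fun hc => ?_⟩
        have h1 := congrArg (fun f => f e0) hc
        rw [hνe0, hg2] at h1
        omega
      · -- small off-part: take g = single e0 (l - B) + erase e0 τ
        have hdt : deg (Finsupp.erase e0 τ) + τ e0 = deg τ := deg_erase e0 τ
        have hBle : deg (Finsupp.erase e0 τ) ≤ l - 1 := by omega
        set g := Finsupp.single e0 (l - deg (Finsupp.erase e0 τ)) + Finsupp.erase e0 τ with hg
        have hga : g e0 = l - deg (Finsupp.erase e0 τ) := by
          rw [hg, Finsupp.add_apply, Finsupp.single_eq_same, Finsupp.erase_same, add_zero]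
        have hgi : ∀ i, i ≠ e0 → g i = τ i := by
          intro i hi
          rw [hg, Finsupp.add_apply, Finsupp.single_eq_of_ne' (Ne.symm hi),
            Finsupp.erase_apply, if_neg hi, zero_add]
        have hdegg : deg g = l := by
          rw [hg, deg_add, deg_single]
          omega
        have hgle : g ≤ τ := by
          rw [Finsupp.le_def]
          intro i
          rcases eq_or_ne i e0 with rfl | hi
          · rw [hga]; omega
          · rw [hgi i hi]
        refine ⟨{g}, ?_, by simp, by simpa [Multiset.sum_singleton] using hgle⟩
        intro x hx
        rw [Multiset.mem_singleton] at hx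
        subst hx
        refine ⟨hdegg, fun hc => ?_⟩
        apply hne
        have h1 := congrArg (fun f => f e0) hc
        rw [hga, hνe0] at h1
        ext j
        rcases eq_or_ne j e0 with rfl | hj
        · rw [hνe0]
          omega
        · have h2 := congrArg (fun f => f j) hc
          rw [hgi j hj] at h2
          exact h2
  | succ m ih =>
    intro τ hdeg hne
    have hmul : (m + 1 + 1) * l = (m + 1) * l + l := by ring
    have hmul2 : (m + 1) * l = m * l + l := by ring
    by_cases h0 : l ≤ τ e0
    · -- use full e0-block
      have hgle : Finsupp.single e0 l ≤ τ := by
        rw [Finsupp.le_def]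
        intro i
        rcases eq_or_ne i e0 with rfl | hi
        · rw [Finsupp.single_eq_same]; exact h0
        · rw [Finsupp.single_eq_of_ne' (Ne.symm hi)]; omega
      obtain ⟨c, hc⟩ := le_iff_exists_add.mp hgle
      have hdc : deg c + l = deg τ := by rw [hc, deg_add, deg_single]; omega
      have hcne : c ≠ ν + Finsupp.single e0 (m*l) := by
        rintro rfl
        apply hne
        rw [hc]
        rw [add_comm (Finsupp.single e0 l), add_assoc, ← Finsupp.single_add]
        congr 2
        ring_nf
      obtain ⟨L, hL1, hL2, hL3⟩ := ih c (by omega) hcne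
      refine ⟨Finsupp.single e0 l ::ₘ L, ?_, by simp [hL2], ?_⟩
      · intro x hx
        rcases Multiset.mem_cons.mp hx with rfl | hx
        · refine ⟨deg_single _ _, fun hcon => ?_⟩
          have h1 := congrArg (fun f => f e1) hcon
          rw [hνe1, Finsupp.single_eq_of_ne' he] at h1
          omega
        · exact hL1 x hx
      · rw [Multiset.sum_cons, hc]
        exact add_le_add_right hL3 _
    · -- τ e0 ≤ l - 1
      rcases Nat.lt_or_ge (τ e0) (l - 1) with h1 | h1
      · -- τ e0 ≤ l - 2 : take g off e0 of degree l
        obtain ⟨g, hg1, hg2, hg3⟩ := exists_le_deg_off e0 l τ (by omega)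
        obtain ⟨c, hc⟩ := le_iff_exists_add.mp hg1
        have hdc : deg c + l = deg τ := by rw [hc, deg_add, hg3]; omega
        have hcne : c ≠ ν + Finsupp.single e0 (m*l) := by
          rintro rfl
          have h2 := congrArg (fun f => f e0) hc
          simp only [Finsupp.add_apply] at h2
          rw [hg2, hνe0, Finsupp.single_eq_same] at h2
          omega
        obtain ⟨L, hL1, hL2, hL3⟩ := ih c (by omega) hcne
        refine ⟨g ::ₘ L, ?_, by simp [hL2], ?_⟩
        · intro x hx
          rcases Multiset.mem_cons.mp hx with rfl | hx
          · refine ⟨hg3, fun hcon => ?_⟩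
            have h2 := congrArg (fun f => f e0) hcon
            rw [hg2, hνe0] at h2
            omega
          · exact hL1 x hx
        · rw [Multiset.sum_cons, hc]
          exact add_le_add_right hL3 _
      · -- τ e0 = l - 1 : take g = single e0 1 + (off-part of degree l - 1)
        have hτ0 : τ e0 = l - 1 := by omega
        obtain ⟨t, ht1, ht2, ht3⟩ := exists_le_deg_off e0 (l-1) τ (by omega)
        set g := Finsupp.single e0 1 + t with hg
        have hdegg : deg g = l := by rw [hg, deg_add, deg_single, ht3]; omega
        have hge0 : g e0 = 1 := by
          rw [hg, Finsupp.add_apply, Finsupp.single_eq_same, ht2, add_zero]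
        have hgle : g ≤ τ := by
          rw [Finsupp.le_def]
          intro i
          rcases eq_or_ne i e0 with rfl | hi
          · rw [hge0]; omega
          · rw [hg, Finsupp.add_apply, Finsupp.single_eq_of_ne' (Ne.symm hi), zero_add]
            exact Finsupp.le_def.mp ht1 i
        obtain ⟨c, hc⟩ := le_iff_exists_add.mp hgle
        have hdc : deg c + l = deg τ := by rw [hc, deg_add, hdegg]; omega
        have hcne : c ≠ ν + Finsupp.single e0 (m*l) := by
          rintro rfl
          have h2 := congrArg (fun f => f e0) hc
          simp only [Finsupp.add_apply] at h2
          rw [hge0, hνe0, Finsupp.single_eq_same] at h2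
          omega
        obtain ⟨L, hL1, hL2, hL3⟩ := ih c (by omega) hcne
        refine ⟨g ::ₘ L, ?_, by simp [hL2], ?_⟩
        · intro x hx
          rcases Multiset.mem_cons.mp hx with rfl | hx
          · refine ⟨hdegg, fun hcon => ?_⟩
            have h2 := congrArg (fun f => f e0) hcon
            rw [hge0, hνe0] at h2
            omega
          · exact hL1 x hx
        · rw [Multiset.sum_cons, hc]
          exact add_le_add_right hL3 _

end Stmt2Aux
namespace Stmt2Aux
open MvPolynomial

variable {d : ℕ} {F : Type*} [CommSemiring F]

/-- exponents decomposable as a sum of `m` admissible generator exponents -/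
def Sdec (l : ℕ) (ν : Fin d →₀ ℕ) (m : ℕ) : Set (Fin d →₀ ℕ) :=
  {σ | ∃ L : Multiset (Fin d →₀ ℕ),
    (∀ g ∈ L, deg g = l ∧ g ≠ ν) ∧ Multiset.card L = m ∧ L.sum = σ}

lemma pow_span (l : ℕ) (ν : Fin d →₀ ℕ) (m : ℕ) :
    (Ideal.span ((fun σ => monomial σ (1:F)) '' {μ | deg μ = l ∧ μ ≠ ν})) ^ m
      = Ideal.span ((fun σ => monomial σ (1:F)) '' Sdec l ν m) := by
  induction m with
  | zero =>
    have h0 : Sdec l ν 0 = {0} := by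
      ext σ
      constructor
      · rintro ⟨L, _, hcard, rfl⟩
        rw [Multiset.card_eq_zero] at hcard
        simp [hcard]
      · rintro rfl
        exact ⟨0, by simp, by simp, by simp⟩
    rw [pow_zero, h0, Set.image_singleton, Ideal.one_eq_top]
    rw [show (monomial (0 : Fin d →₀ ℕ) (1:F)) = 1 by rw [monomial_zero', C_1]]
    exact (Ideal.span_singleton_one).symm
  | succ m ih =>
    rw [pow_succ, ih, Ideal.span_mul_span']
    congr 1
    ext p
    rw [Set.mem_mul]
    constructor
    · rintro ⟨a, ⟨σ, ⟨L, hL, hcard, rfl⟩, rfl⟩, b, ⟨g, hg, rfl⟩, rfl⟩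
      refine ⟨g + L.sum, ⟨g ::ₘ L, fun x hx => ?_, by simp [hcard], Multiset.sum_cons _ _⟩, ?_⟩
      · rcases Multiset.mem_cons.mp hx with rfl | hx
        · exact hg
        · exact hL x hx
      · show monomial (g + L.sum) (1:F) = _
        rw [monomial_mul, one_mul, add_comm]
    · rintro ⟨σ, ⟨L, hL, hcard, rfl⟩, rfl⟩
      have hpos : ∃ a, a ∈ L := Multiset.card_pos_iff_exists_mem.mp (by omega)
      obtain ⟨a, ha⟩ := hpos
      obtain ⟨T, rfl⟩ := Multiset.exists_cons_of_mem ha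
      have hcT : Multiset.card T = m := by
        rw [Multiset.card_cons] at hcard; omega
      refine ⟨monomial T.sum 1,
        ⟨T.sum, ⟨T, fun g hg => hL g (Multiset.mem_cons_of_mem hg), hcT, rfl⟩, rfl⟩,
        monomial a 1, ⟨a, hL a (Multiset.mem_cons_self a T), rfl⟩, ?_⟩
      rw [monomial_mul, one_mul, Multiset.sum_cons, add_comm]

lemma mem_span_image_iff (hF : (1:F) ≠ 0) {S : Set (Fin d →₀ ℕ)} {μ : Fin d →₀ ℕ} :
    monomial μ (1:F) ∈ Ideal.span ((fun σ => monomial σ (1:F)) '' S) ↔ ∃ σ ∈ S, σ ≤ μ := by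
  rw [MvPolynomial.mem_ideal_span_monomial_image]
  simp [support_monomial, hF]

end Stmt2Aux
open MvPolynomial in
theorem Stmt2Aux.master {F : Type*} [Field F] {d l : ℕ} (hl : 3 ≤ l) (e0 e1 : Fin d)
    (he : e0 ≠ e1)
    (I : Ideal (MvPolynomial (Fin d) F))
    (hI : I = Ideal.span
      {p | ∃ μ : Fin d →₀ ℕ, (μ.sum fun _ e => e) = l ∧
        μ ≠ Finsupp.single e0 (l - 1) + Finsupp.single e1 1 ∧
        p = MvPolynomial.monomial μ (1 : F)}) :
    MvPolynomial.monomial (Finsupp.single e0 (l - 1) + Finsupp.single e1 1) (1 : F) ∉ I ∧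
    (∀ i : Fin d, MvPolynomial.X i *
      MvPolynomial.monomial (Finsupp.single e0 (l - 1) + Finsupp.single e1 1) (1 : F) ∈ I) ∧
    (∀ f ∈ I, f * MvPolynomial.monomial (Finsupp.single e0 (l - 1) + Finsupp.single e1 1) (1 : F) ∈
      I ^ 2 + Ideal.span {MvPolynomial.X e0 ^ l}) ∧
    (∀ n : ℕ, ∀ μ : Fin d →₀ ℕ,
      MvPolynomial.monomial μ (1 : F) ∈ I ^ n →
      MvPolynomial.monomial μ (1 : F) ∉ I ^ (n + 1) →
      MvPolynomial.monomial μ (1 : F) * MvPolynomial.X e0 ^ l ∉ I ^ (n + 2)) := by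
  set ν : Fin d →₀ ℕ := Finsupp.single e0 (l - 1) + Finsupp.single e1 1 with hν
  have hνe0 : ν e0 = l - 1 := Stmt2Aux.nu_apply_e0 he l
  have hνe1 : ν e1 = 1 := Stmt2Aux.nu_apply_e1 he l
  have hνj : ∀ j, j ≠ e0 → j ≠ e1 → ν j = 0 := by
    intro j hj0 hj1
    rw [hν, Finsupp.add_apply, Finsupp.single_eq_of_ne' (Ne.symm hj0),
      Finsupp.single_eq_of_ne' (Ne.symm hj1)]
    omega
  have hdegν : Stmt2Aux.deg ν = l := by
    rw [hν, Stmt2Aux.deg_add, Stmt2Aux.deg_single, Stmt2Aux.deg_single]; omega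
  have hIs : I = Ideal.span ((fun σ => monomial σ (1:F)) '' {μ | Stmt2Aux.deg μ = l ∧ μ ≠ ν}) := by
    rw [hI]
    congr 1
    ext p
    constructor
    · rintro ⟨μ, h1, h2, rfl⟩; exact ⟨μ, ⟨h1, h2⟩, rfl⟩
    · rintro ⟨μ, ⟨h1, h2⟩, rfl⟩; exact ⟨μ, h1, h2, rfl⟩
  have hmemiff : ∀ (m : ℕ) (μ' : Fin d →₀ ℕ),
      monomial μ' (1:F) ∈ I ^ m ↔ ∃ σ ∈ Stmt2Aux.Sdec l ν m, σ ≤ μ' := by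
    intro m μ'
    rw [hIs, Stmt2Aux.pow_span, Stmt2Aux.mem_span_image_iff one_ne_zero]
  have hmemI : ∀ μ' : Fin d →₀ ℕ,
      monomial μ' (1:F) ∈ I ↔ ∃ g, (Stmt2Aux.deg g = l ∧ g ≠ ν) ∧ g ≤ μ' := by
    intro μ'
    rw [hIs, Stmt2Aux.mem_span_image_iff one_ne_zero]
    rfl
  refine ⟨?_, ?_, ?_, ?_⟩
  -- (i)
  · intro hmem
    rw [hmemI] at hmem
    obtain ⟨g, ⟨hdg, hgν⟩, hle⟩ := hmem
    exact hgν (Stmt2Aux.eq_of_le_of_deg_le hle (by rw [hdg, hdegν]))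
  -- (ii)
  · intro i
    have hX : (X i : MvPolynomial (Fin d) F) * monomial ν 1
        = monomial (Finsupp.single i 1 + ν) 1 := by
      rw [← pow_one (X i : MvPolynomial (Fin d) F), X_pow_eq_monomial, monomial_mul, one_mul]
    rw [hX, hmemI]
    by_cases hi0 : i = e0
    · refine ⟨Finsupp.single e0 l, ⟨Stmt2Aux.deg_single _ _, fun hc => ?_⟩, ?_⟩
      · have h1 := congrArg (fun f => f e1) hc
        rw [Finsupp.single_eq_of_ne' he, hνe1] at h1
        omega
      · rw [hi0]
        have h1l : 1 + (l - 1) = l := by omega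
        have hsum : Finsupp.single e0 1 + ν = Finsupp.single e0 l + Finsupp.single e1 1 := by
          rw [hν, ← add_assoc, ← Finsupp.single_add, h1l]
        rw [hsum]
        exact self_le_add_right _ _
    · by_cases hi1 : i = e1
      · refine ⟨Finsupp.single e0 (l-2) + Finsupp.single e1 2, ⟨?_, fun hc => ?_⟩, ?_⟩
        · rw [Stmt2Aux.deg_add, Stmt2Aux.deg_single, Stmt2Aux.deg_single]; omega
        · have h1 := congrArg (fun f => f e1) hc
          rw [Finsupp.add_apply, Finsupp.single_eq_of_ne' he, Finsupp.single_eq_same, hνe1] at h1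
          omega
        · rw [hi1]
          have hsum : Finsupp.single e1 1 + ν
              = Finsupp.single e0 (l-1) + Finsupp.single e1 2 := by
            rw [hν, show (2:ℕ) = 1 + 1 from rfl, Finsupp.single_add]
            abel
          rw [hsum]
          exact add_le_add (Finsupp.single_le_single.mpr (by omega)) le_rfl
      · refine ⟨Finsupp.single e0 (l-1) + Finsupp.single i 1, ⟨?_, fun hc => ?_⟩, ?_⟩
        · rw [Stmt2Aux.deg_add, Stmt2Aux.deg_single, Stmt2Aux.deg_single]; omega
        · have h1 := congrArg (fun f => f i) hc
          rw [Finsupp.add_apply, Finsupp.single_eq_of_ne' (fun h => hi0 h.symm),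
            Finsupp.single_eq_same, hνj i hi0 hi1] at h1
          omega
        · have hsum : Finsupp.single i 1 + ν
              = (Finsupp.single e0 (l-1) + Finsupp.single i 1) + Finsupp.single e1 1 := by
            rw [hν]; abel
          rw [hsum]
          exact self_le_add_right _ _
  -- (iii)
  · intro f hf
    rw [hIs] at hf
    refine Submodule.span_induction
      (p := fun x _ => x * monomial ν (1:F) ∈ I ^ 2 + Ideal.span {(X e0 : MvPolynomial (Fin d) F) ^ l})
      ?_ ?_ ?_ ?_ hf
    · rintro p ⟨μ, ⟨hdμ, hμν⟩, rfl⟩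
      show monomial μ (1:F) * monomial ν 1 ∈ _
      rw [monomial_mul, one_mul]
      by_cases h0 : 1 ≤ μ e0
      · have hle : Finsupp.single e0 l ≤ μ + ν := by
          rw [Finsupp.le_def]
          intro j
          rcases eq_or_ne j e0 with rfl | hj
          · rw [Finsupp.single_eq_same, Finsupp.add_apply, hνe0]; omega
          · rw [Finsupp.single_eq_of_ne' (Ne.symm hj)]; omega
        obtain ⟨ρ, hρ⟩ := le_iff_exists_add.mp hle
        apply Submodule.mem_sup_right
        rw [Ideal.mem_span_singleton]
        exact ⟨monomial ρ 1, by rw [X_pow_eq_monomial, monomial_mul, one_mul, ← hρ]⟩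
      · have hμ0 : μ e0 = 0 := by omega
        by_cases hj : ∃ j, j ≠ e0 ∧ j ≠ e1 ∧ μ j ≠ 0
        · obtain ⟨j, hj0, hj1, hjv⟩ := hj
          have hsle : Finsupp.single j 1 ≤ μ := by
            rw [Finsupp.le_def]; intro k
            rcases eq_or_ne k j with rfl | hk
            · rw [Finsupp.single_eq_same]; omega
            · rw [Finsupp.single_eq_of_ne' (Ne.symm hk)]; omega
          obtain ⟨μ', hμ'⟩ := le_iff_exists_add.mp hsle
          have hdegμ' : Stmt2Aux.deg μ' + 1 = l := by
            have h2 := congrArg Stmt2Aux.deg hμ'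
            rw [Stmt2Aux.deg_add, Stmt2Aux.deg_single, hdμ] at h2
            omega
          have hμ'e0 : μ' e0 = 0 := by
            have h2 := congrArg (fun f => f e0) hμ'
            simp only [Finsupp.add_apply] at h2
            rw [Finsupp.single_eq_of_ne' hj0, hμ0] at h2
            omega
          have hαβ : (Finsupp.single e0 (l-1) + Finsupp.single j 1)
              + (μ' + Finsupp.single e1 1) = μ + ν := by
            rw [hμ', hν]; abel
          have hαI : monomial (Finsupp.single e0 (l-1) + Finsupp.single j 1) (1:F) ∈ I := by
            rw [hmemI]
            refine ⟨_, ⟨?_, fun hc => ?_⟩, le_rfl⟩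
            · rw [Stmt2Aux.deg_add, Stmt2Aux.deg_single, Stmt2Aux.deg_single]; omega
            · have h1 := congrArg (fun f => f e1) hc
              rw [Finsupp.add_apply, Finsupp.single_eq_of_ne' he,
                Finsupp.single_eq_of_ne' hj1, hνe1] at h1
              omega
          have hβI : monomial (μ' + Finsupp.single e1 1) (1:F) ∈ I := by
            rw [hmemI]
            refine ⟨_, ⟨?_, fun hc => ?_⟩, le_rfl⟩
            · rw [Stmt2Aux.deg_add, Stmt2Aux.deg_single]; omega
            · have h1 := congrArg (fun f => f e0) hc
              rw [Finsupp.add_apply, Finsupp.single_eq_of_ne' (Ne.symm he), hμ'e0, hνe0] at h1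
              omega
          apply Submodule.mem_sup_left
          rw [show monomial (μ + ν) (1:F)
              = monomial (Finsupp.single e0 (l-1) + Finsupp.single j 1) 1
                * monomial (μ' + Finsupp.single e1 1) 1 by
            rw [monomial_mul, one_mul, hαβ]]
          rw [pow_two]
          exact Ideal.mul_mem_mul hαI hβI
        · push_neg at hj
          have hμeq : μ = Finsupp.single e1 (μ e1) := by
            ext j
            rcases eq_or_ne j e1 with rfl | hj1
            · rw [Finsupp.single_eq_same]
            rcases eq_or_ne j e0 with rfl | hj0
            · rw [Finsupp.single_eq_of_ne' (Ne.symm hj1), hμ0]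
            · rw [Finsupp.single_eq_of_ne' (Ne.symm hj1), hj j hj0 hj1]
          have hμe1 : μ e1 = l := by
            have h2 : Stmt2Aux.deg (Finsupp.single e1 (μ e1)) = l := hμeq ▸ hdμ
            rw [Stmt2Aux.deg_single] at h2
            exact h2
          have hαβ : (Finsupp.single e0 (l-2) + Finsupp.single e1 2)
              + (Finsupp.single e0 1 + Finsupp.single e1 (l-1)) = μ + ν := by
            rw [hν, hμeq, hμe1]
            have h1 : Finsupp.single e0 (l-2) + Finsupp.single e0 1
                = Finsupp.single e0 (l-1) := by
              rw [← Finsupp.single_add]; congr 1; omega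
            have h2 : Finsupp.single e1 2 + Finsupp.single e1 (l-1)
                = Finsupp.single e1 l + Finsupp.single e1 1 := by
              rw [← Finsupp.single_add, ← Finsupp.single_add]; congr 1; omega
            calc (Finsupp.single e0 (l-2) + Finsupp.single e1 2)
                + (Finsupp.single e0 1 + Finsupp.single e1 (l-1))
                = (Finsupp.single e0 (l-2) + Finsupp.single e0 1)
                  + (Finsupp.single e1 2 + Finsupp.single e1 (l-1)) := by abel
              _ = Finsupp.single e0 (l-1) + (Finsupp.single e1 l + Finsupp.single e1 1) := by
                  rw [h1, h2]
              _ = Finsupp.single e1 l + (Finsupp.single e0 (l-1) + Finsupp.single e1 1) := by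
                  abel
          have hαI : monomial (Finsupp.single e0 (l-2) + Finsupp.single e1 2) (1:F) ∈ I := by
            rw [hmemI]
            refine ⟨_, ⟨?_, fun hc => ?_⟩, le_rfl⟩
            · rw [Stmt2Aux.deg_add, Stmt2Aux.deg_single, Stmt2Aux.deg_single]; omega
            · have h1 := congrArg (fun f => f e1) hc
              rw [Finsupp.add_apply, Finsupp.single_eq_of_ne' he,
                Finsupp.single_eq_same, hνe1] at h1
              omega
          have hβI : monomial (Finsupp.single e0 1 + Finsupp.single e1 (l-1)) (1:F) ∈ I := by
            rw [hmemI]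
            refine ⟨_, ⟨?_, fun hc => ?_⟩, le_rfl⟩
            · rw [Stmt2Aux.deg_add, Stmt2Aux.deg_single, Stmt2Aux.deg_single]; omega
            · have h1 := congrArg (fun f => f e0) hc
              rw [Finsupp.add_apply, Finsupp.single_eq_same,
                Finsupp.single_eq_of_ne' (Ne.symm he), hνe0] at h1
              omega
          apply Submodule.mem_sup_left
          rw [show monomial (μ + ν) (1:F)
              = monomial (Finsupp.single e0 (l-2) + Finsupp.single e1 2) 1
                * monomial (Finsupp.single e0 1 + Finsupp.single e1 (l-1)) 1 by
            rw [monomial_mul, one_mul, hαβ]]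
          rw [pow_two]
          exact Ideal.mul_mem_mul hαI hβI
    · show (0 : MvPolynomial (Fin d) F) * _ ∈ _
      rw [zero_mul]; exact Submodule.zero_mem _
    · intro x y hx hy hx' hy'
      show (x + y) * _ ∈ _
      rw [add_mul]; exact Submodule.add_mem _ hx' hy'
    · intro a x hx hx'
      show (a • x) * _ ∈ _
      rw [smul_mul_assoc]; exact Submodule.smul_mem _ a hx'
  -- (iv)
  · intro n μ _ hnot hbad
    have hprod : monomial μ (1:F) * (X e0 : MvPolynomial (Fin d) F) ^ l
        = monomial (μ + Finsupp.single e0 l) 1 := by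
      rw [X_pow_eq_monomial, monomial_mul, one_mul]
    rw [hprod, hmemiff] at hbad
    obtain ⟨σ, ⟨L, hL, hcard, rfl⟩, hle⟩ := hbad
    have hdegsum : Stmt2Aux.deg L.sum = (n+2) * l := by
      rw [Stmt2Aux.deg_multiset_sum_const (fun g hg => (hL g hg).1), hcard]
    have hmono := Stmt2Aux.deg_mono hle
    rw [hdegsum, Stmt2Aux.deg_add, Stmt2Aux.deg_single] at hmono
    have hn2 : (n+2) * l = (n+1) * l + l := by ring
    have hdegμ : (n+1) * l ≤ Stmt2Aux.deg μ := by omega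
    by_cases hb : μ = ν + Finsupp.single e0 (n*l)
    · refine Stmt2Aux.noDec hl he (n+1) ⟨L, hL, hcard, ?_⟩
      have hbsum : μ + Finsupp.single e0 l = ν + Finsupp.single e0 ((n+1) * l) := by
        rw [hb, add_assoc, ← Finsupp.single_add]
        congr 1
        ring_nf
      rw [hbsum] at hle
      exact hle
    · apply hnot
      rw [hmemiff]
      obtain ⟨L', h1, h2, h3⟩ := Stmt2Aux.exDec hl he n μ hdegμ hb
      exact ⟨L'.sum, ⟨L', h1, h2, rfl⟩, h3⟩

/-- Let `d ≥ 2`, `l ≥ 3`, and `I ⊆ F[X_1,…,X_d]` the monomial ideal generated by all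
monomials of degree `l` except `X_1^{l-1}X_2`.  Then (i) `X_1^{l-1}X_2 ∉ I`,
(ii) `(X_1,…,X_d)·X_1^{l-1}X_2 ⊆ I`, (iii) `I·X_1^{l-1}X_2 ⊆ I^2 + (X_1^l)`, and
(iv) for any monomial `m ∈ I^n \ I^{n+1}`, `m·X_1^l ∉ I^{n+2}`
(so `X_1^l` is a non-zerodivisor on `gr_I(R)` and the depth of `gr_I(R)` is exactly 1). -/
theorem stmt_2 (F : Type*) [Field F] (d l : ℕ) (hd : 2 ≤ d) (hl : 3 ≤ l)
    (ν : Fin d →₀ ℕ)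
    (hν : ν = Finsupp.single (⟨0, by omega⟩ : Fin d) (l - 1) +
              Finsupp.single (⟨1, by omega⟩ : Fin d) 1)
    (I : Ideal (MvPolynomial (Fin d) F))
    (hI : I = Ideal.span
      {p | ∃ μ : Fin d →₀ ℕ, (μ.sum fun _ e => e) = l ∧ μ ≠ ν ∧
        p = MvPolynomial.monomial μ (1 : F)}) :
    MvPolynomial.monomial ν (1 : F) ∉ I ∧
    (∀ i : Fin d, MvPolynomial.X i * MvPolynomial.monomial ν (1 : F) ∈ I) ∧
    (∀ f ∈ I, f * MvPolynomial.monomial ν (1 : F) ∈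
      I ^ 2 + Ideal.span {MvPolynomial.X (⟨0, by omega⟩ : Fin d) ^ l}) ∧
    (∀ n : ℕ, ∀ μ : Fin d →₀ ℕ,
      MvPolynomial.monomial μ (1 : F) ∈ I ^ n →
      MvPolynomial.monomial μ (1 : F) ∉ I ^ (n + 1) →
      MvPolynomial.monomial μ (1 : F) * MvPolynomial.X (⟨0, by omega⟩ : Fin d) ^ l ∉
        I ^ (n + 2)) := by
  subst hν
  have he : (⟨0, by omega⟩ : Fin d) ≠ (⟨1, by omega⟩ : Fin d) := by
    intro h
    exact absurd (congrArg Fin.val h) (by simp)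
  exact Stmt2Aux.master hl _ _ he I hI
end

section
/- Let (R, m) be a Noetherian local ring, I an ideal of R containing a non-zerodivisor, and x ∈ I a non-zerodivisor such that (x) is a reduction of I (i.e. I^{s+1} = xI^s for some integer s ≥ 0) and such that ~(I^{n+1}) : x = ~(I^n) for all n ≥ 0 (as holds when x is a superficial element of I). Let t ≥ 0 be an integer. Then the following are equivalent: (a) ~(I^{t+1}) = x·~(I^t) + ~(I^{t+2}); (b) I·~(I^t) + ~(I^{t+2}) ⊆ x·~(I^t) + ~(I^{t+2}); (c) ~(I^{n+1}) = x·~(I^n) for every n ≥ t; (d) ~(I^{t+1}) = x·~(I^t). -/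
/-- The Ratliff-Rush closure of the power `I^n`:  `⋃_{k≥0} (I^{n+k} : I^k)`. -/
noncomputable def rrPow {R : Type*} [CommRing R] (I : Ideal R) (n : ℕ) : Ideal R :=
  ⨆ k : ℕ, (I ^ (n + k)).colon ((I ^ k : Ideal R) : Set R)

/-! Iterating (b) gives `I^j ~(I^t) ⊆ x^j ~(I^t) + ~(I^{t+j+1})`. For `a ∈ ~(I^{t+1})` some
`x^k a` lies in `I^{k+1} ~(I^t)`, hence in `x^{k+1} ~(I^t) + ~(I^{t+k+2})`, and the colon
condition cancels `x^k`: this is (a). Since (a) at level `n` gives (b) at level `n + 1`, (a) holds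
at every `n ≥ t`, and iterating it `s` times gives `~(I^{n+1}) ⊆ x ~(I^n) + ~(I^{n+s+1})`. The
reduction `I^{s+m} = x^m I^s` and the regularity of `x` put the last term inside `x ~(I^n)`,
which is (c). -/

open Ideal

section RatliffRush

variable {R : Type*} [CommRing R] {I : Ideal R}

theorem mem_colon_iff_span_singleton_mul_le {J K : Ideal R} {a : R} :
    a ∈ J.colon (K : Set R) ↔ span {a} * K ≤ J := by
  rw [Submodule.mem_colon, span_singleton_mul_le_iff]
  rfl

theorem monotone_colon_pow_add (I : Ideal R) (n : ℕ) :
    Monotone fun k ↦ (I ^ (n + k)).colon ((I ^ k : Ideal R) : Set R) := by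
  refine monotone_nat_of_le_succ fun k a ha ↦ ?_
  rw [mem_colon_iff_span_singleton_mul_le] at ha ⊢
  rw [pow_succ, ← mul_assoc, ← add_assoc, pow_succ]
  exact mul_le_mul_left ha I

theorem mem_rrPow {n : ℕ} {a : R} :
    a ∈ rrPow I n ↔ ∃ k, span {a} * I ^ k ≤ I ^ (n + k) := by
  simp only [rrPow, Submodule.mem_iSup_of_directed _ (monotone_colon_pow_add I n).directed_le,
    mem_colon_iff_span_singleton_mul_le]

theorem pow_le_rrPow (I : Ideal R) (n : ℕ) : I ^ n ≤ rrPow I n :=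
  le_iSup_of_le 0 le_colon

theorem rrPow_antitone (I : Ideal R) : Antitone (rrPow I) := fun _ _ h ↦
  iSup_mono fun _ ↦ Submodule.colon_mono (pow_le_pow_right (by omega)) subset_rfl

theorem pow_mul_rrPow_le (I : Ideal R) (m n : ℕ) : I ^ m * rrPow I n ≤ rrPow I (n + m) := by
  refine mul_le.2 fun r hr a ha ↦ ?_
  obtain ⟨k, hk⟩ := mem_rrPow.1 ha
  refine mem_rrPow.2 ⟨k, ?_⟩
  calc span {r * a} * I ^ k = span {r} * (span {a} * I ^ k) := by
        rw [← span_singleton_mul_span_singleton, mul_assoc]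
    _ ≤ I ^ m * I ^ (n + k) := mul_le_mul' ((span_singleton_le_iff_mem _).2 hr) hk
    _ = I ^ (n + m + k) := by rw [← pow_add]; ring_nf

theorem mul_rrPow_le (I : Ideal R) (n : ℕ) : I * rrPow I n ≤ rrPow I (n + 1) := by
  simpa using pow_mul_rrPow_le I 1 n

theorem span_singleton_pow_mul_rrPow_le {x : R} (hxI : x ∈ I) (m n : ℕ) :
    span {x ^ m} * rrPow I n ≤ rrPow I (n + m) :=
  (mul_le_mul_left ((span_singleton_le_iff_mem _).2 (pow_mem_pow hxI m)) _).trans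
    (pow_mul_rrPow_le I m n)

theorem span_singleton_mul_rrPow_le {x : R} (hxI : x ∈ I) (n : ℕ) :
    span {x} * rrPow I n ≤ rrPow I (n + 1) := by
  simpa using span_singleton_pow_mul_rrPow_le hxI 1 n

theorem mem_rrPow_of_pow_mul_mem {x : R}
    (hcolon : ∀ n, (rrPow I (n + 1)).colon (span {x}) ≤ rrPow I n) {a : R} {n k : ℕ}
    (h : x ^ k * a ∈ rrPow I (n + k)) : a ∈ rrPow I n := by
  induction k generalizing n a with
  | zero => simpa using h
  | succ k ih =>
    have hxa : x * a ∈ rrPow I (n + 1) :=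
      ih (by rwa [← mul_assoc, ← pow_succ, add_right_comm, add_assoc])
    exact hcolon n (mem_colon_span_singleton.2 (by rwa [mul_comm]))

theorem pow_mul_rrPow_le_of_mul_rrPow_le {x : R} (hxI : x ∈ I) {t : ℕ}
    (hb : I * rrPow I t ≤ span {x} * rrPow I t + rrPow I (t + 2)) (j : ℕ) :
    I ^ j * rrPow I t ≤ span {x ^ j} * rrPow I t + rrPow I (t + j + 1) := by
  induction j with
  | zero => simp
  | succ j ih =>
    have hx2 : span {x ^ j} * rrPow I (t + 2) ≤ rrPow I (t + (j + 1) + 1) := by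
      convert span_singleton_pow_mul_rrPow_le hxI j (t + 2) using 2; omega
    calc I ^ (j + 1) * rrPow I t = I * (I ^ j * rrPow I t) := by ring
      _ ≤ I * (span {x ^ j} * rrPow I t + rrPow I (t + j + 1)) := by gcongr
      _ = span {x ^ j} * (I * rrPow I t) + I * rrPow I (t + j + 1) := by ring
      _ ≤ span {x ^ j} * (span {x} * rrPow I t + rrPow I (t + 2)) + rrPow I (t + j + 1 + 1) := by
        gcongr; exact mul_rrPow_le I _
      _ = span {x ^ (j + 1)} * rrPow I t + span {x ^ j} * rrPow I (t + 2) +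
            rrPow I (t + (j + 1) + 1) := by
        rw [mul_add, ← mul_assoc, span_singleton_mul_span_singleton, ← pow_succ]; ring_nf
      _ ≤ span {x ^ (j + 1)} * rrPow I t + rrPow I (t + (j + 1) + 1) := by
        rw [add_assoc]
        gcongr
        exact sup_le hx2 le_rfl

theorem rrPow_succ_le_of_mul_rrPow_le {x : R} (hxI : x ∈ I)
    (hcolon : ∀ n, (rrPow I (n + 1)).colon (span {x}) ≤ rrPow I n) {t : ℕ}
    (hb : I * rrPow I t ≤ span {x} * rrPow I t + rrPow I (t + 2)) :
    rrPow I (t + 1) ≤ span {x} * rrPow I t + rrPow I (t + 2) := by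
  intro a ha
  obtain ⟨k, hk⟩ := mem_rrPow.1 ha
  have hxa : x ^ k * a ∈ I ^ (k + 1) * rrPow I t := by
    have hpow : I ^ (t + 1 + k) ≤ I ^ (k + 1) * rrPow I t := by
      rw [show t + 1 + k = (k + 1) + t by omega, pow_add]
      gcongr
      exact pow_le_rrPow I t
    rw [mul_comm (x ^ k)]
    exact hpow (hk (mul_mem_mul (mem_span_singleton_self a) (pow_mem_pow hxI k)))
  obtain ⟨u, hu, v, hv, huv⟩ :=
    Submodule.mem_sup.1 (pow_mul_rrPow_le_of_mul_rrPow_le hxI hb (k + 1) hxa)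
  obtain ⟨w, hw, rfl⟩ := mem_span_singleton_mul.1 hu
  have hrest : a - x * w ∈ rrPow I (t + 2) := by
    refine mem_rrPow_of_pow_mul_mem hcolon (k := k) ?_
    rw [show t + 2 + k = t + (k + 1) + 1 by omega]
    convert hv using 1
    linear_combination -huv
  rw [← add_sub_cancel (x * w) a]
  exact Submodule.add_mem_sup (mem_span_singleton_mul.2 ⟨w, hw, rfl⟩) hrest

theorem pow_add_eq_span_singleton_pow_mul {x : R} {s : ℕ}
    (hs : I ^ (s + 1) = span {x} * I ^ s) (m : ℕ) :
    I ^ (s + m) = span {x ^ m} * I ^ s := by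
  induction m with
  | zero => simp
  | succ m ih =>
    rw [← add_assoc, pow_succ, ih, mul_assoc, ← pow_succ, hs, ← mul_assoc,
      span_singleton_mul_span_singleton, ← pow_succ]

theorem rrPow_add_succ_le {x : R} (hxI : x ∈ I) (hx : x ∈ nonZeroDivisors R) {s : ℕ}
    (hs : I ^ (s + 1) = span {x} * I ^ s) (n : ℕ) :
    rrPow I (n + s + 1) ≤ span {x} * rrPow I n := by
  intro a ha
  obtain ⟨k, hk⟩ := mem_rrPow.1 ha
  have hak : a * x ^ k ∈ span {x ^ (n + 1 + k)} * I ^ s := by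
    rw [← pow_add_eq_span_singleton_pow_mul hs, show s + (n + 1 + k) = n + s + 1 + k by omega]
    exact hk (mul_mem_mul (mem_span_singleton_self a) (pow_mem_pow hxI k))
  obtain ⟨w, hw, hwa⟩ := mem_span_singleton_mul.1 hak
  have ha : a = x * (x ^ n * w) :=
    (mul_cancel_right_mem_nonZeroDivisors (pow_mem hx k)).1 (by rw [← hwa]; ring)
  refine mem_span_singleton_mul.2 ⟨x ^ n * w, pow_le_rrPow I n ?_, ha.symm⟩
  exact pow_le_pow_right (by omega) (pow_add I n s ▸ mul_mem_mul (pow_mem_pow hxI n) hw)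

theorem mul_rrPow_succ_le_of_rrPow_succ_le {x : R} {n : ℕ}
    (ha : rrPow I (n + 1) ≤ span {x} * rrPow I n + rrPow I (n + 2)) :
    I * rrPow I (n + 1) ≤ span {x} * rrPow I (n + 1) + rrPow I (n + 1 + 2) :=
  calc I * rrPow I (n + 1) ≤ I * (span {x} * rrPow I n + rrPow I (n + 2)) := by gcongr
    _ = span {x} * (I * rrPow I n) + I * rrPow I (n + 2) := by ring
    _ ≤ span {x} * rrPow I (n + 1) + rrPow I (n + 1 + 2) := by
      gcongr
      · exact mul_rrPow_le I n
      · exact mul_rrPow_le I (n + 2)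

theorem rrPow_succ_le_of_le {x : R} (hxI : x ∈ I)
    (hcolon : ∀ n, (rrPow I (n + 1)).colon (span {x}) ≤ rrPow I n) {t : ℕ}
    (ha : rrPow I (t + 1) ≤ span {x} * rrPow I t + rrPow I (t + 2)) {n : ℕ} (hn : t ≤ n) :
    rrPow I (n + 1) ≤ span {x} * rrPow I n + rrPow I (n + 2) := by
  induction n, hn using Nat.le_induction with
  | base => exact ha
  | succ n _ ih =>
    exact rrPow_succ_le_of_mul_rrPow_le hxI hcolon (mul_rrPow_succ_le_of_rrPow_succ_le ih)

theorem rrPow_succ_le_add_rrPow {x : R} {t : ℕ}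
    (ha : ∀ n, t ≤ n → rrPow I (n + 1) ≤ span {x} * rrPow I n + rrPow I (n + 2))
    {n : ℕ} (hn : t ≤ n) (m : ℕ) :
    rrPow I (n + 1) ≤ span {x} * rrPow I n + rrPow I (n + m + 1) := by
  induction m with
  | zero => exact le_sup_right
  | succ m ih =>
    refine ih.trans (sup_le le_sup_left ((ha (n + m) (by omega)).trans ?_))
    gcongr <;> exact rrPow_antitone I (by omega)

theorem rrPow_succ_eq_of_le {x : R} (hxI : x ∈ I) (hx : x ∈ nonZeroDivisors R) {s : ℕ}
    (hs : I ^ (s + 1) = span {x} * I ^ s)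
    (hcolon : ∀ n, (rrPow I (n + 1)).colon (span {x}) ≤ rrPow I n) {t : ℕ}
    (ha : rrPow I (t + 1) ≤ span {x} * rrPow I t + rrPow I (t + 2)) {n : ℕ} (hn : t ≤ n) :
    rrPow I (n + 1) = span {x} * rrPow I n := by
  refine le_antisymm ?_ (span_singleton_mul_rrPow_le hxI n)
  refine (rrPow_succ_le_add_rrPow (fun _ ↦ rrPow_succ_le_of_le hxI hcolon ha) hn s).trans ?_
  exact sup_le le_rfl (rrPow_add_succ_le hxI hx hs n)

end RatliffRush

theorem stmt_5_general (R : Type*) [CommRing R]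
    (I : Ideal R)
    (x : R) (hxI : x ∈ I) (hx : x ∈ nonZeroDivisors R)
    (hred : ∃ s : ℕ, I ^ (s + 1) = Ideal.span {x} * I ^ s)
    (hcolon : ∀ n : ℕ, (rrPow I (n + 1)).colon (Ideal.span {x}) = rrPow I n)
    (t : ℕ) :
    List.TFAE
      [ rrPow I (t + 1) = Ideal.span {x} * rrPow I t + rrPow I (t + 2),
        I * rrPow I t + rrPow I (t + 2) ≤ Ideal.span {x} * rrPow I t + rrPow I (t + 2),
        ∀ n : ℕ, t ≤ n → rrPow I (n + 1) = Ideal.span {x} * rrPow I n,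
        rrPow I (t + 1) = Ideal.span {x} * rrPow I t ] := by
  obtain ⟨s, hs⟩ := hred
  have hcolon_le n := (hcolon n).le
  have hsucc_succ : rrPow I (t + 2) ≤ rrPow I (t + 1) := rrPow_antitone I (by omega)
  tfae_have 1 → 2 := fun ha ↦ sup_le ((mul_rrPow_le I t).trans ha.le) le_sup_right
  tfae_have 2 → 1 := fun hb ↦ le_antisymm
    (rrPow_succ_le_of_mul_rrPow_le hxI hcolon_le (le_sup_left.trans hb))
    (sup_le (span_singleton_mul_rrPow_le hxI t) hsucc_succ)
  tfae_have 1 → 3 := fun ha _ ↦ rrPow_succ_eq_of_le hxI hx hs hcolon_le ha.le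
  tfae_have 3 → 4 := fun hc ↦ hc t le_rfl
  tfae_have 4 → 1 := fun hd ↦ by
    rw [Submodule.add_eq_sup, sup_eq_left.2 (hd ▸ hsucc_succ), hd]
  tfae_finish

/-- Let `(R,m)` be Noetherian local, `I` a regular ideal, `x ∈ I` a non-zerodivisor with
`(x)` a reduction of `I` and `~(I^{n+1}) : x = ~(I^n)` for all `n` (as for superficial `x`).
Then for `t ≥ 0` the following are equivalent:
(a) `~(I^{t+1}) = x~(I^t) + ~(I^{t+2})`;
(b) `I~(I^t) + ~(I^{t+2}) ⊆ x~(I^t) + ~(I^{t+2})`;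
(c) `~(I^{n+1}) = x~(I^n)` for all `n ≥ t`;
(d) `~(I^{t+1}) = x~(I^t)`. -/
theorem stmt_5 (R : Type*) [CommRing R] [IsNoetherianRing R] [IsLocalRing R]
    (I : Ideal R) (hreg : ∃ y ∈ I, y ∈ nonZeroDivisors R)
    (x : R) (hxI : x ∈ I) (hx : x ∈ nonZeroDivisors R)
    (hred : ∃ s : ℕ, I ^ (s + 1) = Ideal.span {x} * I ^ s)
    (hcolon : ∀ n : ℕ, (rrPow I (n + 1)).colon (Ideal.span {x}) = rrPow I n)
    (t : ℕ) :
    List.TFAE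
      [ rrPow I (t + 1) = Ideal.span {x} * rrPow I t + rrPow I (t + 2),
        I * rrPow I t + rrPow I (t + 2) ≤ Ideal.span {x} * rrPow I t + rrPow I (t + 2),
        ∀ n : ℕ, t ≤ n → rrPow I (n + 1) = Ideal.span {x} * rrPow I n,
        rrPow I (t + 1) = Ideal.span {x} * rrPow I t ] :=
  stmt_5_general R I x hxI hx hred hcolon t
end

section
/- Let F be a field, m ≥ 1 an integer, n = 2m+1 (so n ≥ 3 is odd), and let I = (X^{3n-1}, X^{3n-4}Y^3, X^3Y^{3n-4}, Y^{3n-1}) in F[X,Y]. Then (XY)^{(3n-1)n/2} ∉ I^n, while (XY)^{(3n-1)n/2}·(X^{3n-1})^{2m-1} ∈ I^{n+2m-1}. Consequently (XY)^{(3n-1)n/2} ∈ ~(I^n) \ I^n and I^n is not Ratliff-Rush closed. -/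
open scoped Pointwise

section RatliffRush

variable {R : Type*} [CommSemiring R]

theorem Ideal.prod_mem_pow_card {ι : Type*} {I : Ideal R} {s : Finset ι} {x : ι → R}
    (h : ∀ i ∈ s, x i ∈ I) : ∏ i ∈ s, x i ∈ I ^ s.card := by
  simpa using Ideal.prod_mem_prod (I := fun _ => I) h

theorem exists_eq_pow_mul_of_mem_pow {s : Finset R} {j K : ℕ} (hK : s.card * j < K) {g : R}
    (hg : g ∈ (s : Set R) ^ K) :
    ∃ x ∈ s, ∃ r ∈ Ideal.span (s : Set R) ^ (K - (j + 1)), g = x ^ (j + 1) * r := by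
  classical
  obtain ⟨f, rfl⟩ := Set.mem_pow.1 hg
  obtain ⟨x, hx, hfiber⟩ := Finset.exists_lt_card_fiber_of_mul_lt_card_of_maps_to
    (s := Finset.univ) (f := fun i => (f i : R)) (fun i _ => (f i).2) (by simpa using hK)
  obtain ⟨T, hT, hTcard⟩ := Finset.exists_subset_card_eq (n := j + 1) hfiber
  refine ⟨x, hx, ∏ i ∈ Tᶜ, (f i : R), ?_, ?_⟩
  · have := Ideal.prod_mem_pow_card fun i (_ : i ∈ Tᶜ) => Ideal.subset_span (f i).2
    rwa [Finset.card_compl, Fintype.card_fin, hTcard] at this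
  · rw [List.prod_ofFn, ← Finset.prod_mul_prod_compl T, ← hTcard, ← Finset.prod_const]
    congr 1
    exact Finset.prod_congr rfl fun i hi => (Finset.mem_filter.1 (hT hi)).2

theorem mem_rrPow_of_forall_mul_pow_mem {R : Type*} [CommRing R] {s : Set R} (hs : s.Finite)
    {t : R} {n j : ℕ}
    (h : ∀ x ∈ s, t * x ^ (j + 1) ∈ Ideal.span s ^ (n + (j + 1))) :
    t ∈ rrPow (Ideal.span s) n := by
  lift s to Finset R using hs
  refine Submodule.mem_iSup_of_mem (s.card * j + 1) (Submodule.mem_colon.2 fun p hp => ?_)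
  rw [SetLike.mem_coe, Ideal.span, Submodule.span_pow] at hp
  induction hp using Submodule.span_induction with
  | mem g hg =>
    obtain ⟨x, hx, r, hr, rfl⟩ := exists_eq_pow_mul_of_mem_pow (Nat.lt_succ_self _) hg
    have : j ≤ s.card * j := Nat.le_mul_of_pos_left j (Finset.card_pos.2 ⟨x, hx⟩)
    rw [smul_eq_mul, ← mul_assoc, pow_add,
      show s.card * j + 1 = j + 1 + (s.card * j + 1 - (j + 1)) by omega, pow_add, ← mul_assoc,
      ← pow_add]
    exact Ideal.mul_mem_mul (h x hx) hr
  | zero => simp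
  | add p q _ _ hp hq => rw [smul_add]; exact add_mem hp hq
  | smul a p _ hp => rw [smul_comm]; exact Submodule.smul_mem _ a hp

end RatliffRush

theorem exists_eq_pow_mul_pow_mul_pow_mul_pow {M : Type*} [CommMonoid M] {u v w z g : M} {K : ℕ}
    (hg : g ∈ ({u, v, w, z} : Set M) ^ K) :
    ∃ a b c d : ℕ, a + b + c + d = K ∧ g = u ^ a * v ^ b * w ^ c * z ^ d := by
  induction K generalizing g with
  | zero => exact ⟨0, 0, 0, 0, rfl, by simpa using hg⟩
  | succ K ih =>
    rw [pow_succ] at hg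
    obtain ⟨p, hp, q, hq, rfl⟩ := Set.mem_mul.1 hg
    obtain ⟨a, b, c, d, hsum, rfl⟩ := ih hp
    rcases hq with rfl | rfl | rfl | rfl
    · exact ⟨a + 1, b, c, d, by omega, by rw [pow_succ]; ac_rfl⟩
    · exact ⟨a, b + 1, c, d, by omega, by rw [pow_succ]; ac_rfl⟩
    · exact ⟨a, b, c + 1, d, by omega, by rw [pow_succ]; ac_rfl⟩
    · exact ⟨a, b, c, d + 1, by omega, by rw [pow_succ]; ac_rfl⟩

namespace GapIdeal

/-- The generators of `I` for `m = k + 1`, so that `n = 2k + 3` and `N = 6k + 8` need no truncated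
subtraction. -/
def gens {R : Type*} [CommSemiring R] (X Y : R) (k : ℕ) : Set R :=
  {X ^ (6 * k + 8), X ^ (6 * k + 5) * Y ^ 3, X ^ 3 * Y ^ (6 * k + 5), Y ^ (6 * k + 8)}

theorem X_exponent_ne {k a b c : ℕ} (h : a + b + c ≤ 2 * k + 3) :
    (6 * k + 8) * a + (6 * k + 5) * b + 3 * c ≠ (3 * k + 4) * (2 * k + 3) := by
  intro hP
  obtain ⟨D, hD⟩ : ∃ D : ℤ, D = 2 * k + 3 - 2 * (a + b) := ⟨_, rfl⟩
  have hPℤ : ((6 * k + 8) * a + (6 * k + 5) * b + 3 * c : ℤ) = (3 * k + 4) * (2 * k + 3) := by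
    exact_mod_cast hP
  have key : 3 * ((c : ℤ) - b) = (3 * k + 4) * D := by
    rw [hD]; linear_combination hPℤ
  -- `|c - b| ≤ 2k + 3 < 3k + 4` leaves only `D = ±1`, which is excluded mod 3.
  have hk : (0 : ℤ) ≤ 3 * k + 4 := by positivity
  have hD₁ : -3 < D := by
    by_contra! hle
    nlinarith [mul_nonneg (by linarith : (0 : ℤ) ≤ -3 - D) hk]
  have hD₂ : D < 3 := by
    by_contra! hle
    nlinarith [mul_nonneg (by linarith : (0 : ℤ) ≤ D - 3) hk]
  interval_cases D <;> omega

theorem mul_pow_mem_span_gens_pow {R : Type*} [CommSemiring R] {X Y x : R} {k : ℕ}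
    (hx : x ∈ gens X Y k) :
    (X * Y) ^ ((3 * k + 4) * (2 * k + 3)) * x ^ (2 * k + 1) ∈
      Ideal.span (gens X Y k) ^ (2 * k + 3 + (2 * k + 1)) := by
  have hpow {a b : R} (ha : a ∈ gens X Y k) (hb : b ∈ gens X Y k) (p q : ℕ) :
      a ^ p * b ^ q ∈ Ideal.span (gens X Y k) ^ (p + q) :=
    pow_add (Ideal.span (gens X Y k)) p q ▸ Ideal.mul_mem_mul
      (Ideal.pow_mem_pow (Ideal.subset_span ha) p) (Ideal.pow_mem_pow (Ideal.subset_span hb) q)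
  have hu : X ^ (6 * k + 8) ∈ gens X Y k := by simp [gens]
  have hv : X ^ (6 * k + 5) * Y ^ 3 ∈ gens X Y k := by simp [gens]
  have hw : X ^ 3 * Y ^ (6 * k + 5) ∈ gens X Y k := by simp [gens]
  have hz : Y ^ (6 * k + 8) ∈ gens X Y k := by simp [gens]
  rcases hx with rfl | rfl | rfl | rfl
  · convert hpow hv hz (3 * k + 4) k using 1 <;> ring
  · convert hpow hu hw (3 * k + 1) (k + 3) using 1 <;> ring
  · convert hpow hz hv (3 * k + 1) (k + 3) using 1 <;> ring
  · convert hpow hw hu (3 * k + 4) k using 1 <;> ring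

open MvPolynomial in
theorem X_mul_X_pow_notMem_span_gens_pow {F : Type*} [CommSemiring F] [Nontrivial F] (k : ℕ) :
    (X 0 * X 1 : MvPolynomial (Fin 2) F) ^ ((3 * k + 4) * (2 * k + 3)) ∉
      Ideal.span (gens (X 0) (X 1) k) ^ (2 * k + 3) := by
  have hmono (p q : ℕ) :
      (X 0 ^ p * X 1 ^ q : MvPolynomial (Fin 2) F) =
        monomial (Finsupp.single 0 p + Finsupp.single 1 q) 1 := by
    simp [X_pow_eq_monomial, monomial_mul]
  let E : Set (Fin 2 →₀ ℕ) := {e | ∃ a b c d, a + b + c + d = 2 * k + 3 ∧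
    e = Finsupp.single 0 ((6 * k + 8) * a + (6 * k + 5) * b + 3 * c) +
      Finsupp.single 1 (3 * b + (6 * k + 5) * c + (6 * k + 8) * d)}
  have hle : Ideal.span (gens (X 0) (X 1) k) ^ (2 * k + 3) ≤
      Ideal.span ((fun e => monomial e (1 : F)) '' E) := by
    rw [Ideal.span, Submodule.span_pow]
    refine Submodule.span_mono ?_
    intro g hg
    obtain ⟨a, b, c, d, hsum, rfl⟩ := exists_eq_pow_mul_pow_mul_pow_mul_pow hg
    exact ⟨_, ⟨a, b, c, d, hsum, rfl⟩, (hmono _ _).symm.trans (by ring)⟩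
  intro hmem
  rw [mul_pow, hmono] at hmem
  obtain ⟨e, ⟨a, b, c, d, hsum, rfl⟩, he⟩ := mem_ideal_span_monomial_image.1 (hle hmem)
    (Finsupp.single 0 ((3 * k + 4) * (2 * k + 3)) + Finsupp.single 1 ((3 * k + 4) * (2 * k + 3)))
    (by simp)
  have hX : (6 * k + 8) * a + (6 * k + 5) * b + 3 * c ≤ (3 * k + 4) * (2 * k + 3) := by
    simpa using he 0
  have hY : 3 * b + (6 * k + 5) * c + (6 * k + 8) * d ≤ (3 * k + 4) * (2 * k + 3) := by
    simpa using he 1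
  refine X_exponent_ne (k := k) (a := a) (b := b) (c := c) (by omega) ?_
  nlinarith

end GapIdeal

/-- For odd `n = 2m+1 ≥ 3` and `I = (X^{3n-1}, X^{3n-4}Y^3, X^3Y^{3n-4}, Y^{3n-1})` in
`F[X,Y]`: `(XY)^{(3n-1)n/2} ∉ I^n` while
`(XY)^{(3n-1)n/2}·(X^{3n-1})^{2m-1} ∈ I^{n+2m-1}`; consequently
`(XY)^{(3n-1)n/2} ∈ ~(I^n) \ I^n` and `I^n` is not Ratliff-Rush closed. -/
theorem stmt_11 (F : Type*) [Field F] (m : ℕ) (hm : 1 ≤ m) (n : ℕ) (hn : n = 2 * m + 1)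
    (X Y : MvPolynomial (Fin 2) F)
    (hX : X = MvPolynomial.X 0) (hY : Y = MvPolynomial.X 1)
    (I : Ideal (MvPolynomial (Fin 2) F))
    (hI : I = Ideal.span {X ^ (3 * n - 1), X ^ (3 * n - 4) * Y ^ 3,
      X ^ 3 * Y ^ (3 * n - 4), Y ^ (3 * n - 1)}) :
    (X * Y) ^ ((3 * n - 1) * n / 2) ∉ I ^ n ∧
    (X * Y) ^ ((3 * n - 1) * n / 2) * (X ^ (3 * n - 1)) ^ (2 * m - 1) ∈
      I ^ (n + 2 * m - 1) ∧
    (X * Y) ^ ((3 * n - 1) * n / 2) ∈ rrPow I n ∧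
    rrPow I n ≠ I ^ n := by
  obtain ⟨k, rfl⟩ : ∃ k, m = k + 1 := ⟨m - 1, by omega⟩
  have hN : 3 * n - 1 = 6 * k + 8 := by omega
  have hexp : (3 * n - 1) * n / 2 = (3 * k + 4) * (2 * k + 3) := by
    rw [hN, hn, show 6 * k + 8 = 2 * (3 * k + 4) by ring, mul_assoc,
      Nat.mul_div_cancel_left _ two_pos]
    ring
  obtain rfl : I = Ideal.span (GapIdeal.gens X Y k) := by
    rw [hI, hN, show 3 * n - 4 = 6 * k + 5 by omega]
    rfl
  rw [hexp, hN, show n + 2 * (k + 1) - 1 = 2 * k + 3 + (2 * k + 1) by omega,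
    show 2 * (k + 1) - 1 = 2 * k + 1 by omega, hn, show 2 * (k + 1) + 1 = 2 * k + 3 by ring]
  have hnotMem := hX ▸ hY ▸ GapIdeal.X_mul_X_pow_notMem_span_gens_pow (F := F) k
  have hmem : (X * Y) ^ ((3 * k + 4) * (2 * k + 3)) ∈
      rrPow (Ideal.span (GapIdeal.gens X Y k)) (2 * k + 3) :=
    mem_rrPow_of_forall_mul_pow_mem (by simp [GapIdeal.gens]) fun _ hx =>
      GapIdeal.mul_pow_mem_span_gens_pow hx
  exact ⟨hnotMem, GapIdeal.mul_pow_mem_span_gens_pow (by simp [GapIdeal.gens]), hmem,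
    fun h => hnotMem (h ▸ hmem)⟩
end

section
/- Let F be a field and let R be the subring F[X, Y^2, Y^7, X^2Y^5, X^3Y] of the polynomial ring F[X,Y] (the F-subalgebra generated by X, Y^2, Y^7, X^2Y^5, X^3Y). Let I = (X, Y^2)R. Then X^2Y^5 ∈ I^2 : I and X^2Y^5 ∉ I; hence X^2Y^5 ∈ ~I \ I and the parameter ideal I is not Ratliff-Rush closed. -/
/-!
`X²Y⁵` multiplies `I = (X, Y²)` into `I²` because `X²Y⁵ · X = X³Y · (Y²)²` and
`X²Y⁵ · Y² = Y⁷ · X²`. It is not in `I`, since every monomial of `R` has an exponent in the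
monoid generated by `(1,0), (0,2), (0,7), (2,5), (3,1)`, while `X²Y⁵ = aX + bY²` would force
`XY⁵` to occur in `a` or `X²Y³` in `b`, and neither `(1,5)` nor `(2,3)` lies in that monoid.
-/

open MvPolynomial
open scoped Pointwise

namespace MvPolynomial

variable {σ R : Type*} [CommSemiring R]

variable (R) in
noncomputable def restrictSupportSubalgebra (S : AddSubmonoid (σ →₀ ℕ)) :
    Subalgebra R (MvPolynomial σ R) :=
  (restrictSupport R (S : Set (σ →₀ ℕ))).toSubalgebra
    ((monomial_mem_restrictSupport R).2 (Or.inl S.zero_mem))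
    (fun p q hp hq => by
      have hSS : (S : Set (σ →₀ ℕ)) + S ⊆ S :=
        Set.add_subset_iff.2 fun _ ha _ hb => S.add_mem ha hb
      exact restrictSupport_mono R hSS
        (restrictSupport_add R (S : Set (σ →₀ ℕ)) S ▸ Submodule.mul_mem_mul hp hq))

theorem monomial_mem_restrictSupportSubalgebra {S : AddSubmonoid (σ →₀ ℕ)} {d : σ →₀ ℕ}
    (hd : d ∈ S) (r : R) : monomial d r ∈ restrictSupportSubalgebra R S :=
  (monomial_mem_restrictSupport R).2 (Or.inl hd)

theorem coeff_eq_zero_of_mem_restrictSupportSubalgebra {S : AddSubmonoid (σ →₀ ℕ)}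
    {p : MvPolynomial σ R} (hp : p ∈ restrictSupportSubalgebra R S) {d : σ →₀ ℕ} (hd : d ∉ S) :
    coeff d p = 0 :=
  notMem_support_iff.1 fun h => hd (hp h)

theorem coeff_add_mul_monomial_eq_zero {S : AddSubmonoid (σ →₀ ℕ)}
    {p : MvPolynomial σ R} (hp : p ∈ restrictSupportSubalgebra R S) {d : σ →₀ ℕ} (hd : d ∉ S)
    (e : σ →₀ ℕ) (r : R) : coeff (d + e) (p * monomial e r) = 0 := by
  rw [coeff_mul_monomial, coeff_eq_zero_of_mem_restrictSupportSubalgebra hp hd, zero_mul]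

end MvPolynomial

theorem Ideal.mem_colon_span_pair {R : Type*} [CommSemiring R] {I : Ideal R} {a b r : R} :
    r ∈ I.colon (Ideal.span {a, b}) ↔ r * a ∈ I ∧ r * b ∈ I := by
  simp [Submodule.mem_colon]

theorem colon_le_rrPow {R : Type*} [CommRing R] (I : Ideal R) (n k : ℕ) :
    (I ^ (n + k)).colon ((I ^ k : Ideal R) : Set R) ≤ rrPow I n :=
  le_iSup (fun k => (I ^ (n + k)).colon ((I ^ k : Ideal R) : Set R)) k

/-- Exactly the monoid generated by `(1,0), (0,2), (0,7), (2,5), (3,1)`. -/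
def exponentMonoid : AddSubmonoid (Fin 2 →₀ ℕ) where
  carrier := {d | d 1 % 2 = 1 → 7 ≤ d 1 ∨ 2 ≤ d 0 ∧ 5 ≤ d 1 ∨ 3 ≤ d 0}
  add_mem' := by
    intro a b (ha : _ → _) (hb : _ → _) (_ : _ % 2 = 1)
    simp only [Finsupp.add_apply] at *
    omega
  zero_mem' := by simp

theorem mem_exponentMonoid {d : Fin 2 →₀ ℕ} :
    d ∈ exponentMonoid ↔ (d 1 % 2 = 1 → 7 ≤ d 1 ∨ 2 ≤ d 0 ∧ 5 ≤ d 1 ∨ 3 ≤ d 0) :=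
  Iff.rfl

theorem adjoin_le_restrictSupportSubalgebra_exponentMonoid (F : Type*) [CommSemiring F] :
    Algebra.adjoin F {X 0, X 1 ^ 2, X 1 ^ 7, X 0 ^ 2 * X 1 ^ 5, X 0 ^ 3 * X 1} ≤
      restrictSupportSubalgebra F exponentMonoid := by
  refine Algebra.adjoin_le ?_
  simp only [Set.insert_subset_iff, Set.singleton_subset_iff, SetLike.mem_coe]
  simp only [X, monomial_pow, monomial_mul, one_pow, mul_one]
  refine ⟨?_, ?_, ?_, ?_, ?_⟩ <;>
    exact monomial_mem_restrictSupportSubalgebra (mem_exponentMonoid.2 (by simp)) _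

theorem mul_X_zero_add_mul_X_one_sq_ne {F : Type*} [CommSemiring F] [Nontrivial F]
    {p q : MvPolynomial (Fin 2) F} (hp : p ∈ restrictSupportSubalgebra F exponentMonoid)
    (hq : q ∈ restrictSupportSubalgebra F exponentMonoid) :
    p * X 0 + q * X 1 ^ 2 ≠ X 0 ^ 2 * X 1 ^ 5 := by
  set e : Fin 2 →₀ ℕ := Finsupp.single 0 2 + Finsupp.single 1 5
  have he₀ : e = (Finsupp.single 0 1 + Finsupp.single 1 5) + Finsupp.single 0 1 := by
    ext i; fin_cases i <;> simp [e]
  have he₁ : e = (Finsupp.single 0 2 + Finsupp.single 1 3) + Finsupp.single 1 2 := by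
    ext i; fin_cases i <;> simp [e]
  have hp₀ : coeff e (p * X 0) = 0 := by
    rw [he₀]
    exact coeff_add_mul_monomial_eq_zero hp (by simp [mem_exponentMonoid]) _ _
  have hq₀ : coeff e (q * X 1 ^ 2) = 0 := by
    rw [he₁, X_pow_eq_monomial]
    exact coeff_add_mul_monomial_eq_zero hq (by simp [mem_exponentMonoid]) _ _
  have hw : coeff e (X 0 ^ 2 * X 1 ^ 5 : MvPolynomial (Fin 2) F) = 1 := by
    simp [e, X_pow_eq_monomial, monomial_mul]
  intro h
  simpa [hp₀, hq₀, hw] using congrArg (coeff e) h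

/-- Let `R = F[X, Y^2, Y^7, X^2Y^5, X^3Y] ⊆ F[X,Y]` and `I = (X, Y^2)R`.  Then
`X^2Y^5 ∈ I^2 : I` and `X^2Y^5 ∉ I`; hence `X^2Y^5 ∈ ~I \ I` and the parameter ideal
`I` is not Ratliff-Rush closed. -/
theorem stmt_12 (F : Type*) [Field F]
    (X Y : MvPolynomial (Fin 2) F)
    (hX : X = MvPolynomial.X 0) (hY : Y = MvPolynomial.X 1)
    (A : Subalgebra F (MvPolynomial (Fin 2) F))
    (hA : A = Algebra.adjoin F {X, Y ^ 2, Y ^ 7, X ^ 2 * Y ^ 5, X ^ 3 * Y})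
    (x y2 w : A)
    (hx : (x : MvPolynomial (Fin 2) F) = X)
    (hy2 : (y2 : MvPolynomial (Fin 2) F) = Y ^ 2)
    (hw : (w : MvPolynomial (Fin 2) F) = X ^ 2 * Y ^ 5)
    (I : Ideal A) (hI : I = Ideal.span {x, y2}) :
    w ∈ (I ^ 2).colon I ∧
    w ∉ I ∧
    w ∈ rrPow I 1 ∧
    rrPow I 1 ≠ I := by
  subst hX hY hI
  have hgen : ∀ g ∈ ({X 0, X 1 ^ 2, X 1 ^ 7, X 0 ^ 2 * X 1 ^ 5, X 0 ^ 3 * X 1} :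
      Set (MvPolynomial (Fin 2) F)), g ∈ A := fun g hg => hA ▸ Algebra.subset_adjoin hg
  let u : A := ⟨X 0 ^ 3 * X 1, hgen _ (by simp)⟩
  let v : A := ⟨X 1 ^ 7, hgen _ (by simp)⟩
  have hwx : w * x = u * y2 ^ 2 := Subtype.ext (by push_cast [hx, hy2, hw, u]; ring)
  have hwy2 : w * y2 = v * x ^ 2 := Subtype.ext (by push_cast [hx, hy2, hw, v]; ring)
  have hcolon : w ∈ (Ideal.span {x, y2} ^ 2).colon (Ideal.span {x, y2}) :=
    Ideal.mem_colon_span_pair.2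
      ⟨hwx ▸ Ideal.mul_mem_left _ _ (Ideal.pow_mem_pow (Ideal.subset_span (by simp)) 2),
        hwy2 ▸ Ideal.mul_mem_left _ _ (Ideal.pow_mem_pow (Ideal.subset_span (by simp)) 2)⟩
  have hnotMem : w ∉ Ideal.span {x, y2} := by
    intro hmem
    obtain ⟨a, b, hab⟩ := Ideal.mem_span_pair.1 hmem
    have hA_le := hA ▸ adjoin_le_restrictSupportSubalgebra_exponentMonoid F
    refine mul_X_zero_add_mul_X_one_sq_ne (hA_le a.2) (hA_le b.2) ?_
    simpa [hx, hy2, hw] using congrArg Subtype.val hab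
  have hrr : w ∈ rrPow (Ideal.span {x, y2}) 1 := colon_le_rrPow _ 1 1 (by simpa using hcolon)
  exact ⟨hcolon, hnotMem, hrr, fun h => hnotMem (h ▸ hrr)⟩
end

section
/- Let F be a field and I = X·(X^4, X^3Y, XY^3, Y^4) = (X^5, X^4Y, X^2Y^3, XY^4) in F[X,Y]. Then X^3Y^2·I ⊆ I^2 and X^3Y^2 ∉ I; hence X^3Y^2 ∈ ~I \ I and I is not Ratliff-Rush closed. -/
namespace MvPolynomial

variable {σ R : Type*} [CommSemiring R]

theorem X_pow_mul_X_pow_eq_monomial (i j : σ) (a b : ℕ) :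
    (X i ^ a * X j ^ b : MvPolynomial σ R) =
      monomial (Finsupp.single i a + Finsupp.single j b) 1 := by
  rw [X_pow_eq_monomial, X_pow_eq_monomial, monomial_mul, one_mul]

theorem X_pow_mul_X_pow_mem_span_iff [Nontrivial R] {i j : σ} (hij : i ≠ j) (S : Set (ℕ × ℕ))
    (a b : ℕ) :
    (X i ^ a * X j ^ b : MvPolynomial σ R) ∈
        Ideal.span ((fun p : ℕ × ℕ => X i ^ p.1 * X j ^ p.2) '' S) ↔
      ∃ p ∈ S, p.1 ≤ a ∧ p.2 ≤ b := by
  classical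
  have hexp : ∀ p : ℕ × ℕ, Finsupp.single i p.1 + Finsupp.single j p.2 ≤
      Finsupp.single i a + Finsupp.single j b ↔ p.1 ≤ a ∧ p.2 ≤ b := by
    intro p
    refine ⟨fun h => ⟨?_, ?_⟩, fun ⟨h₁, h₂⟩ => add_le_add (by simpa) (by simpa)⟩
    · simpa [hij, hij.symm] using h i
    · simpa [hij, hij.symm] using h j
  simp_rw [X_pow_mul_X_pow_eq_monomial, ← Set.image_image (fun s => monomial s (1 : R))
    (fun p : ℕ × ℕ => Finsupp.single i p.1 + Finsupp.single j p.2), mem_ideal_span_monomial_image,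
    support_monomial, if_neg one_ne_zero, Finset.mem_singleton, forall_eq, Set.exists_mem_image]
  exact exists_congr fun p => and_congr_right fun _ => hexp p

end MvPolynomial

/-- For `I = X·(X^4, X^3Y, XY^3, Y^4) = (X^5, X^4Y, X^2Y^3, XY^4)` in `F[X,Y]`:
`X^3Y^2·I ⊆ I^2` and `X^3Y^2 ∉ I`; hence `X^3Y^2 ∈ ~I \ I` and `I` is not
Ratliff-Rush closed. -/
theorem stmt_14 (F : Type*) [Field F]
    (X Y : MvPolynomial (Fin 2) F)
    (hX : X = MvPolynomial.X 0) (hY : Y = MvPolynomial.X 1)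
    (I : Ideal (MvPolynomial (Fin 2) F))
    (hI : I = Ideal.span {X ^ 5, X ^ 4 * Y, X ^ 2 * Y ^ 3, X * Y ^ 4}) :
    (∀ f ∈ I, X ^ 3 * Y ^ 2 * f ∈ I ^ 2) ∧
    X ^ 3 * Y ^ 2 ∉ I ∧
    X ^ 3 * Y ^ 2 ∈ rrPow I 1 ∧
    rrPow I 1 ≠ I := by
  have hg₁ : X ^ 5 ∈ I := hI ▸ Ideal.subset_span (by simp)
  have hg₂ : X ^ 4 * Y ∈ I := hI ▸ Ideal.subset_span (by simp)
  have hg₃ : X ^ 2 * Y ^ 3 ∈ I := hI ▸ Ideal.subset_span (by simp)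
  have hg₄ : X * Y ^ 4 ∈ I := hI ▸ Ideal.subset_span (by simp)
  have hcolon : X ^ 3 * Y ^ 2 ∈ (I ^ 2).colon (I : Set _) := by
    suffices X ^ 3 * Y ^ 2 ∈ (I ^ 2).colon {X ^ 5, X ^ 4 * Y, X ^ 2 * Y ^ 3, X * Y ^ 4} by
      rwa [hI, Ideal.colon_span, ← hI]
    simp only [Submodule.mem_colon, Set.mem_insert_iff, Set.mem_singleton_iff, forall_eq_or_imp,
      forall_eq, smul_eq_mul, sq I]
    refine ⟨?_, ?_, ?_, ?_⟩
    · rw [show X ^ 3 * Y ^ 2 * X ^ 5 = X ^ 4 * Y * (X ^ 4 * Y) by ring]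
      exact Ideal.mul_mem_mul hg₂ hg₂
    · rw [show X ^ 3 * Y ^ 2 * (X ^ 4 * Y) = X ^ 5 * (X ^ 2 * Y ^ 3) by ring]
      exact Ideal.mul_mem_mul hg₁ hg₃
    · rw [show X ^ 3 * Y ^ 2 * (X ^ 2 * Y ^ 3) = X ^ 4 * Y * (X * Y ^ 4) by ring]
      exact Ideal.mul_mem_mul hg₂ hg₄
    · rw [show X ^ 3 * Y ^ 2 * (X * Y ^ 4) = X ^ 2 * Y ^ 3 * (X ^ 2 * Y ^ 3) by ring]
      exact Ideal.mul_mem_mul hg₃ hg₃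
  have hnotMem : X ^ 3 * Y ^ 2 ∉ I := by
    have hgens : ({X ^ 5, X ^ 4 * Y, X ^ 2 * Y ^ 3, X * Y ^ 4} : Set (MvPolynomial (Fin 2) F)) =
        (fun p : ℕ × ℕ => X ^ p.1 * Y ^ p.2) '' {(5, 0), (4, 1), (2, 3), (1, 4)} := by
      simp [Set.image_insert_eq]
    rw [hI, hgens, hX, hY, MvPolynomial.X_pow_mul_X_pow_mem_span_iff (by decide)]
    simp
  have hrr : X ^ 3 * Y ^ 2 ∈ rrPow I 1 := Submodule.mem_iSup_of_mem 1 (by rwa [pow_one])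
  exact ⟨fun f hf => Submodule.mem_colon.mp hcolon f hf, hnotMem, hrr, fun h => hnotMem (h ▸ hrr)⟩
end

section
/- Let F be a field and I = (X^4, X^3Y, X^2Y^2, Y^4) in F[X,Y]. Then I is Ratliff-Rush closed, i.e. ⋃_{k≥0} (I^{k+1} : I^k) = I, but I is not integrally closed: XY^3 ∉ I while (XY^3)^2 = (X^2Y^2)(Y^4) ∈ I^2, so XY^3 is integral over I. -/
open MvPolynomial Pointwise

theorem rrPow_one_eq_self {R : Type*} [CommRing R] {I : Ideal R} {a : R} (ha : a ∈ I)
    (h : ∀ (k : ℕ) (f : R), f * a ^ k ∈ I ^ (k + 1) → f ∈ I) : rrPow I 1 = I := by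
  refine le_antisymm (iSup_le fun k f hf => h k f ?_) ?_
  · rw [add_comm k]
    simpa only [smul_eq_mul] using Submodule.mem_colon.mp hf _ (Ideal.pow_mem_pow ha k)
  · refine fun f hf => Submodule.mem_iSup_of_mem 0 (Submodule.mem_colon.mpr fun s _ => ?_)
    simpa using I.mul_mem_right s hf

namespace MvPolynomial

variable {σ R : Type*} [CommSemiring R]

variable (R) in
noncomputable def monomialIdeal (S : Set (σ →₀ ℕ)) : Ideal (MvPolynomial σ R) :=
  Ideal.span ((fun s => monomial s 1) '' S)

theorem monomialIdeal_mono {S T : Set (σ →₀ ℕ)} (h : S ⊆ T) :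
    monomialIdeal R S ≤ monomialIdeal R T :=
  Ideal.span_mono (Set.image_mono h)

theorem monomialIdeal_mul (S T : Set (σ →₀ ℕ)) :
    monomialIdeal R S * monomialIdeal R T = monomialIdeal R (S + T) := by
  rw [monomialIdeal, monomialIdeal, Ideal.span_mul_span', monomialIdeal, ← Set.image2_mul,
    ← Set.image2_add, Set.image2_image_left, Set.image2_image_right, Set.image_image2]
  simp only [monomial_mul, mul_one]

theorem monomialIdeal_range_pow_le {ι : Type*} [Fintype ι] (g : ι → σ →₀ ℕ) (n : ℕ) :
    monomialIdeal R (Set.range g) ^ n ≤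
      monomialIdeal R {t | ∃ c : ι → ℕ, ∑ i, c i = n ∧ ∑ i, c i • g i = t} := by
  induction n with
  | zero =>
    rw [pow_zero, Submodule.one_eq_span]
    exact Ideal.span_mono (Set.singleton_subset_iff.mpr ⟨0, ⟨0, by simp, by simp⟩, by simp⟩)
  | succ n ih =>
    classical
    rw [pow_succ]
    refine (Ideal.mul_mono_left ih).trans ?_
    rw [monomialIdeal_mul]
    refine monomialIdeal_mono ?_
    rintro _ ⟨_, ⟨c, hc, rfl⟩, _, ⟨j, rfl⟩, rfl⟩
    refine ⟨c + Pi.single j 1, ?_, ?_⟩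
    · simp [Finset.sum_add_distrib, hc]
    · simp [add_smul, Finset.sum_add_distrib, Pi.single_apply]

theorem monomial_one_mem_monomialIdeal_iff [Nontrivial R] {S : Set (σ →₀ ℕ)} {m : σ →₀ ℕ} :
    monomial m (1 : R) ∈ monomialIdeal R S ↔ ∃ s ∈ S, s ≤ m := by
  classical
  rw [monomialIdeal, mem_ideal_span_monomial_image, support_monomial, if_neg one_ne_zero]
  simp

theorem mem_monomialIdeal_of_mul_monomial_mem {S T : Set (σ →₀ ℕ)} {m : σ →₀ ℕ}
    {f : MvPolynomial σ R} (hST : ∀ e, ∀ t ∈ T, t ≤ e + m → ∃ s ∈ S, s ≤ e)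
    (hf : f * monomial m 1 ∈ monomialIdeal R T) : f ∈ monomialIdeal R S := by
  rw [monomialIdeal, mem_ideal_span_monomial_image] at hf ⊢
  intro e he
  obtain ⟨t, ht, hle⟩ := hf (e + m) (by simpa [coeff_mul_monomial] using he)
  exact hST e t ht hle

end MvPolynomial

open Finsupp in
noncomputable def exampleExponent : Fin 4 → Fin 2 →₀ ℕ :=
  ![single 0 4, single 0 3 + single 1 1, single 0 2 + single 1 2, single 1 4]

theorem exists_exampleExponent_le_iff (e : Fin 2 →₀ ℕ) :
    (∃ i, exampleExponent i ≤ e) ↔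
      4 ≤ e 0 ∨ 3 ≤ e 0 ∧ 1 ≤ e 1 ∨ 2 ≤ e 0 ∧ 2 ≤ e 1 ∨ 4 ≤ e 1 := by
  simp [Fin.exists_fin_succ, Finsupp.le_def, Fin.forall_fin_two, exampleExponent]

/-- With `c i` copies of the `i`-th generator, `e 0 ≥ 4 c₀ + 3 c₁ + 2 c₂` forces `c₀ = 0` and
`c₁ + c₂ ≤ 1` unless `e 0 ≥ 4`, and then the `Y`-degree left over after removing `Y ^ (4k)` is
at least `4 - 3 c₁ - 2 c₂`. -/
theorem exists_exampleExponent_le_of_sum_le {k : ℕ} {c : Fin 4 → ℕ} {e : Fin 2 →₀ ℕ}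
    (hc : ∑ i, c i = k + 1) (hle : ∑ i, c i • exampleExponent i ≤ e + Finsupp.single 1 (4 * k)) :
    ∃ i, exampleExponent i ≤ e := by
  have h0 : 4 * c 0 + 3 * c 1 + 2 * c 2 ≤ e 0 := by
    simpa [Fin.sum_univ_four, exampleExponent, mul_comm] using hle 0
  have h1 : c 1 + 2 * c 2 + 4 * c 3 ≤ e 1 + 4 * k := by
    simpa [Fin.sum_univ_four, exampleExponent, mul_comm] using hle 1
  rw [Fin.sum_univ_four] at hc
  rw [exists_exampleExponent_le_iff]
  omega

theorem span_eq_monomialIdeal_exampleExponent (R : Type*) [CommSemiring R] :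
    Ideal.span {X 0 ^ 4, X 0 ^ 3 * X 1, X 0 ^ 2 * X 1 ^ 2, X 1 ^ 4} =
      monomialIdeal R (Set.range exampleExponent) := by
  rw [monomialIdeal]
  congr 1
  ext p
  simp [exampleExponent, X, monomial_pow, monomial_mul, eq_comm, or_comm, or_left_comm, or_assoc]

theorem mem_of_mul_X_one_pow_mem {R : Type*} [CommSemiring R] {k : ℕ}
    {f : MvPolynomial (Fin 2) R}
    (hf : f * (X 1 ^ 4) ^ k ∈ monomialIdeal R (Set.range exampleExponent) ^ (k + 1)) :
    f ∈ monomialIdeal R (Set.range exampleExponent) := by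
  rw [← pow_mul, X_pow_eq_monomial] at hf
  refine mem_monomialIdeal_of_mul_monomial_mem ?_ (monomialIdeal_range_pow_le _ _ hf)
  rintro e _ ⟨c, hc, rfl⟩ hle
  obtain ⟨i, hi⟩ := exists_exampleExponent_le_of_sum_le hc hle
  exact ⟨_, ⟨i, rfl⟩, hi⟩

/-- The ideal `I = (X^4, X^3Y, X^2Y^2, Y^4)` of `F[X,Y]` is Ratliff-Rush closed, but not
integrally closed: `XY^3 ∉ I` while `(XY^3)^2 = (X^2Y^2)·(Y^4) ∈ I^2`, so `XY^3` is
integral over `I`. -/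
theorem stmt_15 (F : Type*) [Field F]
    (X Y : MvPolynomial (Fin 2) F)
    (hX : X = MvPolynomial.X 0) (hY : Y = MvPolynomial.X 1)
    (I : Ideal (MvPolynomial (Fin 2) F))
    (hI : I = Ideal.span {X ^ 4, X ^ 3 * Y, X ^ 2 * Y ^ 2, Y ^ 4}) :
    rrPow I 1 = I ∧
    X * Y ^ 3 ∉ I ∧
    (X * Y ^ 3) ^ 2 = X ^ 2 * Y ^ 2 * Y ^ 4 ∧
    X ^ 2 * Y ^ 2 * Y ^ 4 ∈ I ^ 2 := by
  subst hX hY hI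
  have hXY : (X 0 * X 1 ^ 3 : MvPolynomial (Fin 2) F) =
      monomial (Finsupp.single 0 1 + Finsupp.single 1 3) 1 := by
    simp [X, monomial_pow, monomial_mul]
  refine ⟨rrPow_one_eq_self (a := X 1 ^ 4) (Ideal.subset_span (by simp)) fun k f hf => ?_, ?_,
    by ring, ?_⟩
  · rw [span_eq_monomialIdeal_exampleExponent] at hf ⊢
    exact mem_of_mul_X_one_pow_mem hf
  · rw [span_eq_monomialIdeal_exampleExponent, hXY, monomial_one_mem_monomialIdeal_iff,
      Set.exists_range_iff, exists_exampleExponent_le_iff]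
    simp
  · rw [pow_two]
    exact Ideal.mul_mem_mul (Ideal.subset_span (by simp)) (Ideal.subset_span (by simp))
end
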